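/- arXiv:1805.06940 — 2 statements merged into one kernel-verified Lean document; each statement's English description precedes it below -/
import Mathlib

section
/- If f0'(d) = 0, then f1'(d) = 1/f0(d) (in particular f0(d) ≠ 0), the quantity f0(d) + f1'(d) = f0(d) + 1/f0(d) is nonzero, and as ω → 0 (ω ≠ 0) the transmission coefficient satisfies a(ω) = −(1/2)·( f0(d) + f1'(d) ) + O(ω). -/
/-!
The Wronskian `f0 f1' - f1 f0'` is identically `1`, so `f0'(d) = 0` forces `f0(d) f1'(d) = 1`.
Since `q` is real, `conj ∘ f0` solves the same initial value problem as `f0`, hence `f0(d)` is a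
nonzero real number and `f0(d) + 1 / f0(d) ≠ 0`.

For the asymptotics, compare `y1(·, ω)` with the solution `g` of the zero-energy equation that has
the same Cauchy data `(e^{iωd}, iω e^{iωd})` at `d`; because `f0'(d) = 0` it is
`g = e^{iωd} ((f1'(d) - iω f1(d)) f0 + iω f0(d) f1)`. The difference `E = y1 - g` satisfies
`E'' = (q - ω²) E - ω² g` with zero Cauchy data at `d`, so Grönwall's inequality on `[0, d]` bounds
`E(0)` and `E'(0)` by `O(ω²)`, uniformly for small `ω`. Dividing by `2iω` in the Wronskian formula
for `a(ω)` loses one power.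
-/

open Complex Filter Topology Asymptotics Set
open scoped ComplexConjugate

theorem gronwallBound_zero_mul (K c ε x : ℝ) :
    gronwallBound 0 K (c * ε) x = c * gronwallBound 0 K ε x := by
  by_cases hK : K = 0
  · simp only [gronwallBound_K0, hK]; ring
  · simp only [gronwallBound_of_K_ne_0 hK]; ring

section SecondOrder

variable {E : Type*} [NormedAddCommGroup E] [NormedSpace ℝ E] {u u' w : ℝ → E} {a b K ε : ℝ}

theorem norm_prod_le_gronwallBound_of_hasDerivAt
    (hu : ∀ t, HasDerivAt u (u' t) t) (hu' : ∀ t, HasDerivAt u' (w t) t)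
    (hK : 1 ≤ K) (hε : 0 ≤ ε) (hw : ∀ t ∈ Ico a b, ‖w t‖ ≤ K * ‖u t‖ + ε) :
    ∀ x ∈ Icc a b, ‖(u x, u' x)‖ ≤ gronwallBound ‖(u a, u' a)‖ K ε (x - a) := by
  refine norm_le_gronwallBound_of_norm_deriv_right_le (f' := fun t => (u' t, w t))
    (fun t _ => ((hu t).prodMk (hu' t)).continuousAt.continuousWithinAt)
    (fun t _ => ((hu t).prodMk (hu' t)).hasDerivWithinAt) le_rfl fun t ht => ?_
  refine norm_prod_le_iff.2 ⟨?_, ?_⟩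
  · calc ‖u' t‖ ≤ ‖(u t, u' t)‖ := norm_snd_le (u t, u' t)
      _ ≤ K * ‖(u t, u' t)‖ := le_mul_of_one_le_left (norm_nonneg _) hK
      _ ≤ K * ‖(u t, u' t)‖ + ε := le_add_of_nonneg_right hε
  · calc ‖w t‖ ≤ K * ‖u t‖ + ε := hw t ht
      _ ≤ K * ‖(u t, u' t)‖ + ε := by
        have hK0 : 0 ≤ K := zero_le_one.trans hK
        gcongr
        exact norm_fst_le (u t, u' t)

theorem norm_prod_le_gronwallBound_of_hasDerivAt_rev
    (hu : ∀ t, HasDerivAt u (u' t) t) (hu' : ∀ t, HasDerivAt u' (w t) t)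
    (hK : 1 ≤ K) (hε : 0 ≤ ε) (hw : ∀ t ∈ Ioc a b, ‖w t‖ ≤ K * ‖u t‖ + ε) :
    ∀ x ∈ Icc a b, ‖(u x, u' x)‖ ≤ gronwallBound ‖(u b, u' b)‖ K ε (b - x) := by
  intro x hx
  have h := norm_prod_le_gronwallBound_of_hasDerivAt (a := a) (b := b)
    (u := fun t => u (a + b - t)) (u' := fun t => -u' (a + b - t)) (w := fun t => w (a + b - t))
    (fun t => (hu _).comp_const_sub _ t) (fun t => by simpa using (hu' _).neg.comp_const_sub _ t)
    hK hε (fun t ht => hw _ ⟨by linarith [ht.2], by linarith [ht.1]⟩) (a + b - x)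
    ⟨by linarith [hx.2], by linarith [hx.1]⟩
  rw [show a + b - x - a = b - x by ring] at h
  simpa [Prod.norm_def] using h

end SecondOrder

section LinearSecondOrder

variable {a b : ℝ}

theorem eq_zero_of_hasDerivAt_of_eq_zero {p : ℝ → ℂ} (hp : ContinuousOn p (Icc a b))
    {u u' : ℝ → ℂ} (hu : ∀ t, HasDerivAt u (u' t) t) (hu' : ∀ t, HasDerivAt u' (p t * u t) t)
    (ha : u a = 0) (ha' : u' a = 0) : ∀ x ∈ Icc a b, u x = 0 := by
  obtain ⟨P, hP⟩ := isCompact_Icc.exists_bound_of_continuousOn hp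
  have hbound : ∀ t ∈ Ico a b, ‖p t * u t‖ ≤ (|P| + 1) * ‖u t‖ + 0 := fun t ht => by
    rw [norm_mul, add_zero]
    gcongr
    linarith [hP t (Ico_subset_Icc_self ht), le_abs_self P]
  intro x hx
  have h := norm_prod_le_gronwallBound_of_hasDerivAt hu hu'
    (le_add_of_nonneg_left (abs_nonneg P)) le_rfl hbound x hx
  simpa [ha, ha', gronwallBound_ε0_δ0] using (norm_fst_le (u x, u' x)).trans h

theorem conj_eq_of_hasDerivAt_ofReal (hab : a ≤ b) {q : ℝ → ℝ} (hq : ContinuousOn q (Icc a b))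
    {f f' : ℝ → ℂ} (hf : ∀ t, HasDerivAt f (f' t) t)
    (hf' : ∀ t, HasDerivAt f' (q t * f t) t)
    (ha : conj (f a) = f a) (ha' : conj (f' a) = f' a) : conj (f b) = f b := by
  refine sub_eq_zero.1 <| eq_zero_of_hasDerivAt_of_eq_zero (continuous_ofReal.comp_continuousOn hq)
    (u := fun t => conj (f t) - f t) (u' := fun t => conj (f' t) - f' t)
    (fun t => (hf t).star.sub (hf t)) (fun t => ?_) (sub_eq_zero.2 ha) (sub_eq_zero.2 ha')
    b ⟨hab, le_rfl⟩
  refine ((hf' t).star.sub (hf' t)).congr_deriv ?_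
  simp [mul_sub]

theorem wronskian_eq_of_hasDerivAt {p : ℝ → ℂ} {u u' v v' : ℝ → ℂ}
    (hu : ∀ t, HasDerivAt u (u' t) t) (hu' : ∀ t, HasDerivAt u' (p t * u t) t)
    (hv : ∀ t, HasDerivAt v (v' t) t) (hv' : ∀ t, HasDerivAt v' (p t * v t) t) (x y : ℝ) :
    u x * v' x - v x * u' x = u y * v' y - v y * u' y := by
  have hW : ∀ t, HasDerivAt (fun t => u t * v' t - v t * u' t) 0 t := fun t =>
    (((hu t).mul (hv' t)).sub ((hv t).mul (hu' t))).congr_deriv (by ring)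
  exact is_const_of_deriv_eq_zero (fun t => (hW t).differentiableAt) (fun t => (hW t).deriv) x y

end LinearSecondOrder

theorem add_one_div_ne_zero_of_conj_eq {z : ℂ} (hz : conj z = z) (hz₀ : z ≠ 0) :
    z + 1 / z ≠ 0 := by
  obtain ⟨r, rfl⟩ := conj_eq_iff_real.1 hz
  have hr : r ≠ 0 := by exact_mod_cast hz₀
  have : r + 1 / r ≠ 0 := fun h => by
    have : r * (r + 1 / r) = r ^ 2 + 1 := by field_simp
    rw [h, mul_zero] at this
    nlinarith [sq_nonneg r]
  exact_mod_cast this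

theorem Asymptotics.IsBigO.div_of_isBigO_sq {α 𝕜 : Type*} [NormedField 𝕜] {l : Filter α}
    {f g : α → 𝕜} (h : f =O[l] fun x => g x ^ 2) : (fun x => f x / g x) =O[l] g := by
  refine (h.mul (isBigO_refl (fun x => (g x)⁻¹) l)).congr'
    (Eventually.of_forall fun x => (div_eq_mul_inv _ _).symm) (Eventually.of_forall fun x => ?_)
  by_cases hx : g x = 0
  · simp [hx]
  · field_simp

theorem solution_sub_zeroEnergy_isBigO_sq {a b : ℝ} (hab : a ≤ b) {q : ℝ → ℝ}
    (hq : ContinuousOn q (Icc a b)) {y y' g g' : ℂ → ℝ → ℂ}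
    (hy : ∀ ω : ℂ, ω ≠ 0 → ∀ x, HasDerivAt (y ω) (y' ω x) x)
    (hy' : ∀ ω : ℂ, ω ≠ 0 → ∀ x, HasDerivAt (y' ω) (((q x : ℂ) - ω ^ 2) * y ω x) x)
    (hg : ∀ ω x, HasDerivAt (g ω) (g' ω x) x)
    (hg' : ∀ ω x, HasDerivAt (g' ω) ((q x : ℂ) * g ω x) x)
    (hgc : Continuous (Function.uncurry g))
    (hb : ∀ ω : ℂ, ω ≠ 0 → y ω b = g ω b) (hb' : ∀ ω : ℂ, ω ≠ 0 → y' ω b = g' ω b) :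
    (fun ω => y ω a - g ω a) =O[𝓝[≠] 0] (fun ω => ω ^ 2) ∧
      (fun ω => y' ω a - g' ω a) =O[𝓝[≠] 0] (fun ω => ω ^ 2) := by
  obtain ⟨Q, hQ⟩ := isCompact_Icc.exists_bound_of_continuousOn hq
  obtain ⟨M, hM⟩ :=
    ((isCompact_closedBall (0 : ℂ) 1).prod isCompact_Icc).exists_bound_of_continuousOn
      hgc.continuousOn
  have hQ0 : 0 ≤ Q := (norm_nonneg _).trans (hQ a ⟨le_rfl, hab⟩)
  have hM0 : 0 ≤ M :=
    (norm_nonneg _).trans (hM (0, a) ⟨Metric.mem_closedBall_self zero_le_one, le_rfl, hab⟩)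
  have hpair : ∀ᶠ ω in 𝓝[≠] (0 : ℂ), ‖(y ω a - g ω a, y' ω a - g' ω a)‖ ≤
      gronwallBound 0 (Q + 1) M (b - a) * ‖ω ^ 2‖ := by
    filter_upwards [self_mem_nhdsWithin,
      nhdsWithin_le_nhds (Metric.closedBall_mem_nhds (0 : ℂ) one_pos)] with ω hω hωball
    have hω1 : ‖ω‖ ^ 2 ≤ 1 := pow_le_one₀ (norm_nonneg ω) (mem_closedBall_zero_iff.1 hωball)
    have hbound : ∀ t ∈ Ioc a b, ‖((q t : ℂ) - ω ^ 2) * (y ω t - g ω t) - ω ^ 2 * g ω t‖ ≤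
        (Q + 1) * ‖y ω t - g ω t‖ + ‖ω‖ ^ 2 * M := fun t ht => by
      have htq : ‖((q t : ℂ) - ω ^ 2)‖ ≤ Q + 1 := (norm_sub_le _ _).trans <| by
        rw [norm_real, norm_pow]
        exact add_le_add (hQ t (Ioc_subset_Icc_self ht)) hω1
      have htg : ‖g ω t‖ ≤ M := hM (ω, t) ⟨hωball, Ioc_subset_Icc_self ht⟩
      calc _ ≤ ‖((q t : ℂ) - ω ^ 2) * (y ω t - g ω t)‖ + ‖ω ^ 2 * g ω t‖ := norm_sub_le _ _
        _ = ‖((q t : ℂ) - ω ^ 2)‖ * ‖y ω t - g ω t‖ + ‖ω‖ ^ 2 * ‖g ω t‖ := by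
            rw [norm_mul, norm_mul, norm_pow]
        _ ≤ (Q + 1) * ‖y ω t - g ω t‖ + ‖ω‖ ^ 2 * M := by gcongr
    have h := norm_prod_le_gronwallBound_of_hasDerivAt_rev (fun t => (hy ω hω t).sub (hg ω t))
      (fun t => ((hy' ω hω t).sub (hg' ω t)).congr_deriv (by ring)) (by linarith) (by positivity)
      hbound a ⟨le_rfl, hab⟩
    simp only [Pi.sub_apply, hb ω hω, hb' ω hω, sub_self, Prod.mk_zero_zero, norm_zero,
      gronwallBound_zero_mul] at h
    rwa [norm_pow, mul_comm]
  exact ⟨.of_bound _ (hpair.mono fun ω h => (norm_fst_le _).trans h),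
    .of_bound _ (hpair.mono fun ω h => (norm_snd_le _).trans h)⟩

theorem transmission_formula_sub_isBigO (d : ℝ) {c0 c1 c1' : ℂ} {y y' : ℂ → ℂ}
    (hy : (fun ω => y ω - exp (I * ω * d) * (c1' - I * ω * c1)) =O[𝓝[≠] 0] fun ω => ω ^ 2)
    (hy' : (fun ω => y' ω - exp (I * ω * d) * (I * ω * c0)) =O[𝓝[≠] 0] fun ω => ω ^ 2) :
    (fun ω => -(1 / (2 * I * ω)) * (y' ω + I * ω * y ω) - (-(1 / 2) * (c0 + c1')))
      =O[𝓝[≠] 0] fun ω => ω := by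
  set e : ℂ → ℂ := fun ω => exp (I * ω * d)
  have he1 : (fun ω => e ω - 1) =O[𝓝[≠] 0] fun ω => ω := by
    have h := (((hasDerivAt_id (0 : ℂ)).const_mul I).mul_const (d : ℂ)).cexp.isBigO_sub
    simpa using h.mono nhdsWithin_le_nhds
  have he : e =O[𝓝[≠] 0] fun _ => (1 : ℂ) :=
    ((Continuous.tendsto (by fun_prop) 0).mono_left nhdsWithin_le_nhds).isBigO_one ℂ
  have hid : (fun ω : ℂ => ω) =O[𝓝[≠] 0] fun _ => (1 : ℂ) :=
    ((continuous_id.tendsto 0).mono_left nhdsWithin_le_nhds).isBigO_one ℂ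
  have hX : (fun ω => (y' ω - e ω * (I * ω * c0)) + I * (ω * (y ω - e ω * (c1' - I * ω * c1)))
      + I * (c0 + c1') * (ω * (e ω - 1)) + c1 * (ω ^ 2 * e ω)) =O[𝓝[≠] 0] fun ω => ω ^ 2 := by
    refine ((hy'.add ?_).add ?_).add ?_
    · simpa using (hid.mul hy).const_mul_left I
    · simpa [sq] using ((isBigO_refl (fun ω : ℂ => ω) _).mul he1).const_mul_left (I * (c0 + c1'))
    · simpa using ((isBigO_refl (fun ω : ℂ => ω ^ 2) _).mul he).const_mul_left c1
  refine (hX.const_mul_left (-(2 * I)⁻¹)).div_of_isBigO_sq.congr' ?_ EventuallyEq.rfl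
  filter_upwards [self_mem_nhdsWithin] with ω (hω : ω ≠ 0)
  field_simp
  linear_combination -(e ω * ω ^ 2 * c1) * I_sq

theorem transmission_coefficient_neumann_case_general
    (d : ℝ) (hd : 0 < d) (q : ℝ → ℝ) (hq : Continuous q)
    (y1 y1' y2 y2' : ℂ → ℝ → ℂ)
    (hy1 : ∀ ω : ℂ, ω ≠ 0 → ∀ x, HasDerivAt (y1 ω) (y1' ω x) x)
    (hy1'' : ∀ ω : ℂ, ω ≠ 0 → ∀ x, HasDerivAt (y1' ω) (((q x : ℂ) - ω ^ 2) * y1 ω x) x)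
    (hy1d : ∀ ω : ℂ, ω ≠ 0 → y1 ω d = Complex.exp (Complex.I * ω * d))
    (hy1d' : ∀ ω : ℂ, ω ≠ 0 → y1' ω d = Complex.I * ω * Complex.exp (Complex.I * ω * d))
    (hy20 : ∀ ω : ℂ, ω ≠ 0 → y2 ω 0 = 1)
    (hy20' : ∀ ω : ℂ, ω ≠ 0 → y2' ω 0 = -Complex.I * ω)
    (a : ℂ → ℂ)
    (ha : ∀ ω : ℂ, ω ≠ 0 →
      a ω = -(1 / (2 * Complex.I * ω)) * (y1' ω 0 * y2 ω 0 - y1 ω 0 * y2' ω 0))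
    (f0 f0' f1 f1' : ℝ → ℂ)
    (hf0 : ∀ x, HasDerivAt f0 (f0' x) x)
    (hf0' : ∀ x, HasDerivAt f0' ((q x : ℂ) * f0 x) x)
    (hf00 : f0 0 = 1) (hf00' : f0' 0 = 0)
    (hf1 : ∀ x, HasDerivAt f1 (f1' x) x)
    (hf1' : ∀ x, HasDerivAt f1' ((q x : ℂ) * f1 x) x)
    (hf10 : f1 0 = 0) (hf10' : f1' 0 = 1)
    (hf0d : f0' d = 0) :
    f0 d ≠ 0 ∧ f1' d = 1 / f0 d ∧ f0 d + f1' d ≠ 0 ∧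
    (fun ω : ℂ => a ω - (-(1 / 2) * (f0 d + f1' d)))
      =O[𝓝[≠] 0] (fun ω : ℂ => ω) := by
  have hW : f0 d * f1' d = 1 := by
    simpa [hf0d, hf00, hf00', hf10, hf10'] using wronskian_eq_of_hasDerivAt hf0 hf0' hf1 hf1' d 0
  have hf0d_ne : f0 d ≠ 0 := left_ne_zero_of_mul_eq_one hW
  have hf1'd : f1' d = 1 / f0 d := eq_one_div_of_mul_eq_one_right hW
  have hreal : conj (f0 d) = f0 d :=
    conj_eq_of_hasDerivAt_ofReal hd.le hq.continuousOn hf0 hf0' (by simp [hf00]) (by simp [hf00'])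
  refine ⟨hf0d_ne, hf1'd, hf1'd ▸ add_one_div_ne_zero_of_conj_eq hreal hf0d_ne, ?_⟩
  set α : ℂ → ℂ := fun ω => exp (I * ω * d) * (f1' d - I * ω * f1 d)
  set β : ℂ → ℂ := fun ω => exp (I * ω * d) * (I * ω * f0 d)
  have hgc : Continuous fun p : ℂ × ℝ => α p.1 * f0 p.2 + β p.1 * f1 p.2 := by
    have hf0c : Continuous f0 := continuous_iff_continuousAt.2 fun x => (hf0 x).continuousAt
    have hf1c : Continuous f1 := continuous_iff_continuousAt.2 fun x => (hf1 x).continuousAt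
    fun_prop
  obtain ⟨hE, hE'⟩ := solution_sub_zeroEnergy_isBigO_sq hd.le hq.continuousOn hy1 hy1''
    (g := fun ω x => α ω * f0 x + β ω * f1 x) (g' := fun ω x => α ω * f0' x + β ω * f1' x)
    (fun ω x => ((hf0 x).const_mul (α ω)).add ((hf1 x).const_mul (β ω)))
    (fun ω x => (((hf0' x).const_mul (α ω)).add ((hf1' x).const_mul (β ω))).congr_deriv (by ring))
    hgc (fun ω hω => by simp only [hy1d ω hω]; linear_combination -exp (I * ω * d) * hW)
    (fun ω hω => by
      simp only [hy1d' ω hω]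
      linear_combination -(I * ω * exp (I * ω * d)) * hW
        + exp (I * ω * d) * (I * ω * f1 d - f1' d) * hf0d)
  refine (transmission_formula_sub_isBigO d (by simpa [α, β, hf00, hf10] using hE)
    (by simpa [α, β, hf00', hf10'] using hE')).congr' ?_ EventuallyEq.rfl
  filter_upwards [self_mem_nhdsWithin] with ω (hω : ω ≠ 0)
  rw [ha ω hω, hy20 ω hω, hy20' ω hω]
  ring

/-- If `f0'(d) = 0`, then `f0(d) ≠ 0`, `f1'(d) = 1/f0(d)`,
`f0(d) + f1'(d) ≠ 0`, and as `ω → 0` (`ω ≠ 0`),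
`a(ω) = −(1/2)·(f0(d) + f1'(d)) + O(ω)`. -/
theorem transmission_coefficient_neumann_case
    (d : ℝ) (hd : 0 < d) (q : ℝ → ℝ) (hq : Continuous q)
    (hqsupp : ∀ x : ℝ, x ∉ Set.Icc 0 d → q x = 0)
    (y1 y1' y2 y2' : ℂ → ℝ → ℂ)
    (hy1 : ∀ ω : ℂ, ω ≠ 0 → ∀ x, HasDerivAt (y1 ω) (y1' ω x) x)
    (hy1'' : ∀ ω : ℂ, ω ≠ 0 → ∀ x, HasDerivAt (y1' ω) (((q x : ℂ) - ω ^ 2) * y1 ω x) x)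
    (hy1d : ∀ ω : ℂ, ω ≠ 0 → y1 ω d = Complex.exp (Complex.I * ω * d))
    (hy1d' : ∀ ω : ℂ, ω ≠ 0 → y1' ω d = Complex.I * ω * Complex.exp (Complex.I * ω * d))
    (hy2 : ∀ ω : ℂ, ω ≠ 0 → ∀ x, HasDerivAt (y2 ω) (y2' ω x) x)
    (hy2'' : ∀ ω : ℂ, ω ≠ 0 → ∀ x, HasDerivAt (y2' ω) (((q x : ℂ) - ω ^ 2) * y2 ω x) x)
    (hy20 : ∀ ω : ℂ, ω ≠ 0 → y2 ω 0 = 1)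
    (hy20' : ∀ ω : ℂ, ω ≠ 0 → y2' ω 0 = -Complex.I * ω)
    (a : ℂ → ℂ)
    (ha : ∀ ω : ℂ, ω ≠ 0 →
      a ω = -(1 / (2 * Complex.I * ω)) * (y1' ω 0 * y2 ω 0 - y1 ω 0 * y2' ω 0))
    (f0 f0' f1 f1' : ℝ → ℂ)
    (hf0 : ∀ x, HasDerivAt f0 (f0' x) x)
    (hf0' : ∀ x, HasDerivAt f0' ((q x : ℂ) * f0 x) x)
    (hf00 : f0 0 = 1) (hf00' : f0' 0 = 0)
    (hf1 : ∀ x, HasDerivAt f1 (f1' x) x)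
    (hf1' : ∀ x, HasDerivAt f1' ((q x : ℂ) * f1 x) x)
    (hf10 : f1 0 = 0) (hf10' : f1' 0 = 1)
    (hf0d : f0' d = 0) :
    f0 d ≠ 0 ∧ f1' d = 1 / f0 d ∧ f0 d + f1' d ≠ 0 ∧
    (fun ω : ℂ => a ω - (-(1 / 2) * (f0 d + f1' d)))
      =O[𝓝[≠] 0] (fun ω : ℂ => ω) :=
  transmission_coefficient_neumann_case_general d hd q hq y1 y1' y2 y2' hy1 hy1'' hy1d hy1d' hy20
    hy20' a ha f0 f0' f1 f1' hf0 hf0' hf00 hf00' hf1 hf1' hf10 hf10' hf0d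
end

section
/- For the constant compactly supported potential, lim_{ω → 0, ω ≠ 0} 2iω·a(ω) = −α₀·sin(α₀ d), where α₀ is a square root of −C. Consequently: if C > 0 the limit equals √C·sinh(√C·d) ≠ 0, so a(ω) has a simple pole at the origin; if C < 0 the limit equals −√(−C)·sin(√(−C)·d), which vanishes if and only if √(−C)·d = nπ for some n ∈ ℤ. Thus a(ω) fails to have a simple pole at the origin only if C ≤ 0 and √(−C)·d ∈ πℤ. -/
/-!
On `[0, d]` the potential is the constant `C`, so for `β² = ω² - C` the Jost solution `y₁` solves
`y'' = -β² y` there. Its Wronskians with `cos (β (d - x))` and `sin (β (d - x))` are constant,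
which carries the data `y₁(d) = e^{iωd}`, `y₁'(d) = iω e^{iωd}` back to `x = 0`; since
`y₂(0) = 1` and `y₂'(0) = -iω`, this gives
`2iω a(ω) = -e^{iωd} (2iω cos (βd) + (β² + ω²) sin (βd) / β)`.
Writing `sin (βd) / β` as `dslope (z ↦ sin (z d)) 0 β`, which is continuous through `β = 0`, and
letting `ω → 0` along a branch `β(ω) → α₀`, the limit is `-α₀² · dslope … α₀ = -α₀ sin (α₀ d)`.
The closed forms for `C > 0` and `C < 0` come from the evenness of `α ↦ α sin (α d)`.
-/

open Complex Filter Topology Set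

section Wronskian

variable {a b : ℝ} {y y' v v' : ℝ → ℂ}

theorem hasDerivWithinAt_Icc_of_eq_add_integral {c : ℝ} {f g : ℝ → ℂ} {f₀ : ℂ}
    (hg : Continuous g) (hf : ∀ x ∈ Icc a b, f x = f₀ + ∫ t in c..x, g t) :
    ∀ x ∈ Icc a b, HasDerivWithinAt f (g x) (Icc a b) x := fun x hx =>
  ((hg.integral_hasStrictDerivAt c x).hasDerivAt.const_add f₀).hasDerivWithinAt.congr hf (hf x hx)

theorem wronskian_eq_of_hasDerivWithinAt {k : ℂ} (hab : a ≤ b)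
    (hy : ∀ x ∈ Icc a b, HasDerivWithinAt y (y' x) (Icc a b) x)
    (hy' : ∀ x ∈ Icc a b, HasDerivWithinAt y' (k * y x) (Icc a b) x)
    (hv : ∀ x ∈ Icc a b, HasDerivWithinAt v (v' x) (Icc a b) x)
    (hv' : ∀ x ∈ Icc a b, HasDerivWithinAt v' (k * v x) (Icc a b) x) :
    y' a * v a - y a * v' a = y' b * v b - y b * v' b := by
  have hW : ∀ x ∈ Icc a b,
      HasDerivWithinAt (fun x => y' x * v x - y x * v' x) 0 (Icc a b) x := fun x hx =>
    (((hy' x hx).mul (hv x hx)).sub ((hy x hx).mul (hv' x hx))).congr_deriv (by ring)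
  have := norm_image_sub_le_of_norm_deriv_le_segment' hW (fun _ _ => norm_zero.le) b ⟨hab, le_rfl⟩
  rw [zero_mul, norm_le_zero_iff, sub_eq_zero] at this
  exact this.symm

theorem hasDerivAt_cos_mul_sub (β : ℂ) (b x : ℝ) :
    HasDerivAt (fun x : ℝ => cos (β * (b - x))) (β * sin (β * (b - x))) x := by
  have := (((hasDerivAt_id (x : ℂ)).const_sub (b : ℂ)).const_mul β).ccos.comp_ofReal
  simp only [id] at this
  exact this.congr_deriv (by ring)

theorem hasDerivAt_sin_mul_sub (β : ℂ) (b x : ℝ) :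
    HasDerivAt (fun x : ℝ => sin (β * (b - x))) (-β * cos (β * (b - x))) x := by
  have := (((hasDerivAt_id (x : ℂ)).const_sub (b : ℂ)).const_mul β).csin.comp_ofReal
  simp only [id] at this
  exact this.congr_deriv (by ring)

theorem harmonic_oscillator_transfer (hab : a ≤ b) {β : ℂ}
    (hy : ∀ x ∈ Icc a b, HasDerivWithinAt y (y' x) (Icc a b) x)
    (hy' : ∀ x ∈ Icc a b, HasDerivWithinAt y' (-β ^ 2 * y x) (Icc a b) x) :
    y' a = cos (β * (b - a)) * y' b + β * sin (β * (b - a)) * y b ∧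
      β * y a = β * cos (β * (b - a)) * y b - sin (β * (b - a)) * y' b := by
  have hcos := wronskian_eq_of_hasDerivWithinAt hab hy hy'
    (fun x _ => (hasDerivAt_cos_mul_sub β b x).hasDerivWithinAt)
    (fun x _ =>
      ((hasDerivAt_sin_mul_sub β b x).const_mul β).hasDerivWithinAt.congr_deriv (by ring))
  have hsin := wronskian_eq_of_hasDerivWithinAt hab hy hy'
    (fun x _ => (hasDerivAt_sin_mul_sub β b x).hasDerivWithinAt)
    (fun x _ =>
      ((hasDerivAt_cos_mul_sub β b x).const_mul (-β)).hasDerivWithinAt.congr_deriv (by ring))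
  simp only [sub_self, mul_zero, cos_zero, sin_zero] at hcos hsin
  have hpyth := sin_sq_add_cos_sq (β * (b - a))
  constructor
  · linear_combination cos (β * (b - a)) * hcos + sin (β * (b - a)) * hsin - y' a * hpyth
  · linear_combination -sin (β * (b - a)) * hcos + cos (β * (b - a)) * hsin - β * y a * hpyth

end Wronskian

theorem jost_deriv_add_I_mul_at_zero_eq {d C : ℝ} (hd : 0 ≤ d) {ω β : ℂ} (hβ0 : β ≠ 0)
    (hβ : β ^ 2 = ω ^ 2 - C) {y y' : ℝ → ℂ} (hy : ∀ x, HasDerivAt y (y' x) x)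
    (hy' : ∀ x : ℝ, y' x = y' d +
      ∫ t in d..x, (((if t ∈ Icc 0 d then C else 0 : ℝ) : ℂ) - ω ^ 2) * y t)
    (hyd : y d = exp (I * ω * d)) (hyd' : y' d = I * ω * exp (I * ω * d)) :
    y' 0 + I * ω * y 0 = exp (I * ω * d) *
      (2 * I * ω * cos (β * d) + (β ^ 2 + ω ^ 2) * dslope (fun z => sin (z * d)) 0 β) := by
  have hy'_Icc : ∀ x ∈ Icc 0 d, y' x = y' d + ∫ t in d..x, -β ^ 2 * y t := fun x hx => by
    rw [hy' x, intervalIntegral.integral_congr fun t ht => ?_]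
    rw [if_pos (uIcc_subset_Icc ⟨hd, le_rfl⟩ hx ht), hβ]
    ring
  have hcont : Continuous y := continuous_iff_continuousAt.2 fun x => (hy x).continuousAt
  obtain ⟨hy'0, hy0⟩ := harmonic_oscillator_transfer hd (fun x _ => (hy x).hasDerivWithinAt)
    (hasDerivWithinAt_Icc_of_eq_add_integral (continuous_const.mul hcont) hy'_Icc)
  have hslope := sub_smul_dslope (fun z => sin (z * d)) 0 β
  simp only [ofReal_zero, sub_zero, smul_eq_mul, zero_mul, sin_zero] at hy'0 hy0 hslope
  rw [hyd, hyd'] at hy'0 hy0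
  refine mul_left_cancel₀ hβ0 ?_
  linear_combination β * hy'0 + I * ω * hy0 - (β ^ 2 + ω ^ 2) * exp (I * ω * d) * hslope
    - ω ^ 2 * exp (I * ω * d) * sin (β * d) * I_sq

theorem continuous_dslope_sin_mul (d : ℂ) : Continuous (dslope (fun z => sin (z * d)) 0) :=
  continuousOn_univ.1 <| (continuousOn_dslope univ_mem).2
    ⟨by fun_prop, (differentiable_sin.comp (differentiable_id.mul_const d)) 0⟩

theorem tendsto_jost_transmission_limit {α₀ : ℂ} {β : ℂ → ℂ} (d : ℂ)
    (hβ : Tendsto β (𝓝[≠] 0) (𝓝 α₀)) :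
    Tendsto (fun ω => -(exp (I * ω * d) * (2 * I * ω * cos (β ω * d) +
        (β ω ^ 2 + ω ^ 2) * dslope (fun z => sin (z * d)) 0 (β ω))))
      (𝓝[≠] 0) (𝓝 (-α₀ * sin (α₀ * d))) := by
  have hslope := sub_smul_dslope (fun z => sin (z * d)) 0 α₀
  simp only [sub_zero, smul_eq_mul, zero_mul, sin_zero] at hslope
  have hF : Continuous fun p : ℂ × ℂ => -(exp (I * p.1 * d) * (2 * I * p.1 * cos (p.2 * d) +
      (p.2 ^ 2 + p.1 ^ 2) * dslope (fun z => sin (z * d)) 0 p.2)) := by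
    have := continuous_dslope_sin_mul d
    fun_prop
  convert (hF.tendsto (0, α₀)).comp ((tendsto_id.mono_left nhdsWithin_le_nhds).prodMk_nhds hβ)
    using 2
  · rfl
  · simp only [mul_zero, zero_mul, exp_zero, zero_add, one_mul, ne_eq, OfNat.ofNat_ne_zero,
      not_false_eq_true, zero_pow, add_zero]
    linear_combination α₀ * hslope

theorem exists_tendsto_nhdsNE_sq_eq_sq_add (α₀ : ℂ) :
    ∃ β : ℂ → ℂ, Tendsto β (𝓝[≠] 0) (𝓝 α₀) ∧
      ∀ᶠ ω in 𝓝[≠] 0, β ω ^ 2 = ω ^ 2 + α₀ ^ 2 ∧ β ω ≠ 0 := by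
  rcases eq_or_ne α₀ 0 with rfl | hα₀
  · exact ⟨id, nhdsWithin_le_nhds, eventually_mem_nhdsWithin.mono fun ω hω => ⟨by simp, hω⟩⟩
  -- near `ω = 0` the base `1 + ω² / α₀²` is close to `1`, away from the branch cut of `cpow`
  set β : ℂ → ℂ := fun ω => α₀ * (1 + ω ^ 2 / α₀ ^ 2) ^ (2⁻¹ : ℂ)
  have hβ : ContinuousAt β 0 := continuousAt_const.mul <|
    (continuousAt_cpow_const (by simp)).comp (f := fun ω : ℂ => 1 + ω ^ 2 / α₀ ^ 2) (by fun_prop)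
  have hlim : Tendsto β (𝓝[≠] 0) (𝓝 α₀) := by
    simpa [β] using hβ.tendsto.mono_left nhdsWithin_le_nhds
  refine ⟨β, hlim, (hlim.eventually_ne hα₀).mono fun ω hne => ⟨?_, hne⟩⟩
  simp only [β, mul_pow, cpow_ofNat_inv_pow]
  field_simp
  ring

theorem neg_mul_sin_mul_eq_of_sq_eq {α β : ℂ} (h : α ^ 2 = β ^ 2) (x : ℂ) :
    -α * sin (α * x) = -β * sin (β * x) := by
  rcases sq_eq_sq_iff_eq_or_eq_neg.1 h with rfl | rfl
  · rfl
  · rw [neg_mul β, sin_neg]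
    ring

theorem neg_mul_sin_mul_of_sq_eq_neg_of_nonneg {C : ℝ} (hC : 0 ≤ C) {α : ℂ} (hα : α ^ 2 = -C)
    (x : ℝ) : -α * sin (α * x) = (√C * Real.sinh (√C * x) : ℝ) := by
  have hsq : α ^ 2 = (I * √C) ^ 2 := by
    rw [hα, mul_pow, I_sq, ← ofReal_pow, Real.sq_sqrt hC]
    ring
  rw [neg_mul_sin_mul_eq_of_sq_eq hsq, show I * √C * x = (√C * x : ℝ) * I by push_cast; ring,
    sin_mul_I]
  push_cast
  linear_combination -√C * sinh (√C * x) * I_sq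

theorem neg_mul_sin_mul_of_sq_eq_neg_of_nonpos {C : ℝ} (hC : C ≤ 0) {α : ℂ} (hα : α ^ 2 = -C)
    (x : ℝ) : -α * sin (α * x) = (-√(-C) * Real.sin (√(-C) * x) : ℝ) := by
  have hsq : α ^ 2 = (√(-C) : ℂ) ^ 2 := by
    rw [hα, ← ofReal_pow, Real.sq_sqrt (neg_nonneg.2 hC), ofReal_neg]
  rw [neg_mul_sin_mul_eq_of_sq_eq hsq]
  push_cast
  rfl

theorem Real.neg_mul_sin_mul_eq_zero_iff {r : ℝ} (hr : r ≠ 0) (x : ℝ) :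
    -r * Real.sin (r * x) = 0 ↔ ∃ n : ℤ, r * x = n * Real.pi := by
  rw [mul_eq_zero, neg_eq_zero, or_iff_right hr, Real.sin_eq_zero_iff]
  simp only [eq_comm]

theorem transmission_pole_constant_potential_general
    (d : ℝ) (hd : 0 < d) (C : ℝ)
    (α₀ : ℂ) (hα₀ : α₀ ^ 2 = -(C : ℂ))
    (y1 y1' y2 y2' : ℂ → ℝ → ℂ)
    (hy1 : ∀ ω : ℂ, ω ≠ 0 → ∀ x, HasDerivAt (y1 ω) (y1' ω x) x)
    (hy1' : ∀ ω : ℂ, ω ≠ 0 → ∀ x : ℝ, y1' ω x = y1' ω d +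
      ∫ t in d..x, (((if t ∈ Set.Icc 0 d then C else 0 : ℝ) : ℂ) - ω ^ 2) * y1 ω t)
    (hy1d : ∀ ω : ℂ, ω ≠ 0 → y1 ω d = Complex.exp (Complex.I * ω * d))
    (hy1d' : ∀ ω : ℂ, ω ≠ 0 → y1' ω d = Complex.I * ω * Complex.exp (Complex.I * ω * d))
    (hy20 : ∀ ω : ℂ, ω ≠ 0 → y2 ω 0 = 1)
    (hy20' : ∀ ω : ℂ, ω ≠ 0 → y2' ω 0 = -Complex.I * ω)
    (a : ℂ → ℂ)
    (ha : ∀ ω : ℂ, ω ≠ 0 →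
      a ω = -(1 / (2 * Complex.I * ω)) * (y1' ω 0 * y2 ω 0 - y1 ω 0 * y2' ω 0)) :
    Tendsto (fun ω : ℂ => 2 * Complex.I * ω * a ω) (𝓝[≠] 0)
      (𝓝 (-α₀ * Complex.sin (α₀ * d))) ∧
    (0 < C →
      -α₀ * Complex.sin (α₀ * d) = (Real.sqrt C * Real.sinh (Real.sqrt C * d) : ℝ) ∧
      -α₀ * Complex.sin (α₀ * d) ≠ 0) ∧
    (C < 0 →
      -α₀ * Complex.sin (α₀ * d) = (-(Real.sqrt (-C)) * Real.sin (Real.sqrt (-C) * d) : ℝ) ∧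
      (-α₀ * Complex.sin (α₀ * d) = 0 ↔ ∃ n : ℤ, Real.sqrt (-C) * d = n * Real.pi)) ∧
    (-α₀ * Complex.sin (α₀ * d) = 0 →
      C ≤ 0 ∧ ∃ n : ℤ, Real.sqrt (-C) * d = n * Real.pi) := by
  obtain ⟨β, hβ_lim, hβ⟩ := exists_tendsto_nhdsNE_sq_eq_sq_add α₀
  have hlim : Tendsto (fun ω : ℂ => 2 * Complex.I * ω * a ω) (𝓝[≠] 0)
      (𝓝 (-α₀ * Complex.sin (α₀ * d))) := by
    refine (tendsto_jost_transmission_limit d hβ_lim).congr' ?_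
    filter_upwards [self_mem_nhdsWithin, hβ] with ω (hω : ω ≠ 0) ⟨hβω, hβ0⟩
    have hβC : β ω ^ 2 = ω ^ 2 - C := by rw [hβω, hα₀]; ring
    rw [ha ω hω, hy20 ω hω, hy20' ω hω, ← jost_deriv_add_I_mul_at_zero_eq hd.le hβ0 hβC
      (hy1 ω hω) (hy1' ω hω) (hy1d ω hω) (hy1d' ω hω)]
    field_simp
    ring
  have hpos := fun hC : 0 < C => neg_mul_sin_mul_of_sq_eq_neg_of_nonneg hC.le hα₀ d
  have hpos_ne (hC : 0 < C) : -α₀ * Complex.sin (α₀ * d) ≠ 0 := by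
    rw [hpos hC, ofReal_ne_zero]
    have := Real.sqrt_pos.2 hC
    exact (mul_pos this (Real.sinh_pos_iff.2 (mul_pos this hd))).ne'
  have hneg := fun hC : C < 0 => neg_mul_sin_mul_of_sq_eq_neg_of_nonpos hC.le hα₀ d
  have hneg_iff (hC : C < 0) :
      -α₀ * Complex.sin (α₀ * d) = 0 ↔ ∃ n : ℤ, Real.sqrt (-C) * d = n * Real.pi := by
    rw [hneg hC, ofReal_eq_zero,
      Real.neg_mul_sin_mul_eq_zero_iff (Real.sqrt_pos.2 (neg_pos.2 hC)).ne']
  refine ⟨hlim, fun hC => ⟨hpos hC, hpos_ne hC⟩, fun hC => ⟨hneg hC, hneg_iff hC⟩, fun h0 => ?_⟩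
  rcases lt_trichotomy C 0 with hC | rfl | hC
  · exact ⟨hC.le, (hneg_iff hC).1 h0⟩
  · exact ⟨le_rfl, 0, by simp⟩
  · exact absurd h0 (hpos_ne hC)

/-- For the constant potential `q = C` on `[0,d]` (zero outside),
`lim_{ω→0, ω≠0} 2iω·a(ω) = −α₀·sin(α₀d)` where `α₀² = −C`. Consequently, for `C > 0` the
limit equals `√C·sinh(√C·d) ≠ 0` (so `a` has a simple pole at the origin); for `C < 0` the
limit equals `−√(−C)·sin(√(−C)·d)`, which vanishes iff `√(−C)·d = nπ` for some `n ∈ ℤ`.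
Thus the limit vanishes (i.e. `a` fails to have a simple pole at the origin) only if
`C ≤ 0` and `√(−C)·d ∈ πℤ`. -/
theorem transmission_pole_constant_potential
    (d : ℝ) (hd : 0 < d) (C : ℝ)
    (α₀ : ℂ) (hα₀ : α₀ ^ 2 = -(C : ℂ))
    (y1 y1' y2 y2' : ℂ → ℝ → ℂ)
    (hy1 : ∀ ω : ℂ, ω ≠ 0 → ∀ x, HasDerivAt (y1 ω) (y1' ω x) x)
    (hy1' : ∀ ω : ℂ, ω ≠ 0 → ∀ x : ℝ, y1' ω x = y1' ω d +
      ∫ t in d..x, (((if t ∈ Set.Icc 0 d then C else 0 : ℝ) : ℂ) - ω ^ 2) * y1 ω t)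
    (hy1d : ∀ ω : ℂ, ω ≠ 0 → y1 ω d = Complex.exp (Complex.I * ω * d))
    (hy1d' : ∀ ω : ℂ, ω ≠ 0 → y1' ω d = Complex.I * ω * Complex.exp (Complex.I * ω * d))
    (hy2 : ∀ ω : ℂ, ω ≠ 0 → ∀ x, HasDerivAt (y2 ω) (y2' ω x) x)
    (hy2' : ∀ ω : ℂ, ω ≠ 0 → ∀ x : ℝ, y2' ω x = y2' ω 0 +
      ∫ t in (0 : ℝ)..x, (((if t ∈ Set.Icc 0 d then C else 0 : ℝ) : ℂ) - ω ^ 2) * y2 ω t)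
    (hy20 : ∀ ω : ℂ, ω ≠ 0 → y2 ω 0 = 1)
    (hy20' : ∀ ω : ℂ, ω ≠ 0 → y2' ω 0 = -Complex.I * ω)
    (a : ℂ → ℂ)
    (ha : ∀ ω : ℂ, ω ≠ 0 →
      a ω = -(1 / (2 * Complex.I * ω)) * (y1' ω 0 * y2 ω 0 - y1 ω 0 * y2' ω 0)) :
    Tendsto (fun ω : ℂ => 2 * Complex.I * ω * a ω) (𝓝[≠] 0)
      (𝓝 (-α₀ * Complex.sin (α₀ * d))) ∧
    (0 < C →
      -α₀ * Complex.sin (α₀ * d) = (Real.sqrt C * Real.sinh (Real.sqrt C * d) : ℝ) ∧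
      -α₀ * Complex.sin (α₀ * d) ≠ 0) ∧
    (C < 0 →
      -α₀ * Complex.sin (α₀ * d) = (-(Real.sqrt (-C)) * Real.sin (Real.sqrt (-C) * d) : ℝ) ∧
      (-α₀ * Complex.sin (α₀ * d) = 0 ↔ ∃ n : ℤ, Real.sqrt (-C) * d = n * Real.pi)) ∧
    (-α₀ * Complex.sin (α₀ * d) = 0 →
      C ≤ 0 ∧ ∃ n : ℤ, Real.sqrt (-C) * d = n * Real.pi) :=
  transmission_pole_constant_potential_general d hd C α₀ hα₀ y1 y1' y2 y2' hy1 hy1' hy1d hy1d' hy20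
    hy20' a ha
end
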